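/- The execution cost of an STPG (i.e., of its reduced TPG) is a lower bound on the execution cost of every acyclic TPG producible from it by settling all switchable edges. -/
import Mathlib


/-- A directed walk of length `n` (number of edges) from `u` to `v` in the graph
with edge relation `E`. -/
inductive Walk {V : Type*} (E : V → V → Prop) : V → V → ℕ → Prop
  | nil (v : V) : Walk E v v 0
  | cons {u v w : V} {n : ℕ} : E u v → Walk E v w n → Walk E u w (n + 1)

/-- A directed graph is acyclic if every closed walk is trivial. -/
def Acyclic {V : Type*} (E : V → V → Prop) : Prop :=
  ∀ v n, Walk E v v n → n = 0

/-- Forward longest path length: the maximum number of edges over all directed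
walks ending at `v`. -/
noncomputable def LPL {V : Type*} (E : V → V → Prop) (v : V) : ℕ :=
  sSup {n | ∃ u, Walk E u v n}

/-- Longest path length from `u` to `v`. -/
noncomputable def LPLfrom {V : Type*} (E : V → V → Prop) (u v : V) : ℕ :=
  sSup {n | Walk E u v n}

lemma walk_mono {V : Type*} {E E' : V → V → Prop} (h : ∀ a c, E a c → E' a c)
    {u v : V} {n : ℕ} (w : Walk E u v n) : Walk E' u v n := by
  induction w with
  | nil v => exact Walk.nil v
  | cons e _ ih => exact Walk.cons (h _ _ e) ih

lemma walk_fn {V : Type*} {E : V → V → Prop} {u v : V} {n : ℕ} (w : Walk E u v n) :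
    ∃ f : ℕ → V, f 0 = u ∧ f n = v ∧ ∀ i < n, E (f i) (f (i + 1)) := by
  induction w with
  | nil v => exact ⟨fun _ => v, rfl, rfl, fun i hi => absurd hi (Nat.not_lt_zero i)⟩
  | @cons u v w n e _ ih =>
    obtain ⟨f, h0, hn, hE⟩ := ih
    refine ⟨fun k => Nat.casesOn k u f, rfl, hn, ?_⟩
    intro i hi
    cases i with
    | zero => simpa [h0] using e
    | succ j => exact hE j (Nat.lt_of_succ_lt_succ hi)

lemma walk_of_fn {V : Type*} {E : V → V → Prop} (f : ℕ → V) :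
    ∀ d i : ℕ, (∀ k < i + d, E (f k) (f (k + 1))) → Walk E (f i) (f (i + d)) d := by
  intro d
  induction d with
  | zero => intro i _; exact Walk.nil (f i)
  | succ m ih =>
    intro i hE
    have e : E (f i) (f (i + 1)) := hE i (by omega)
    have w : Walk E (f (i + 1)) (f (i + 1 + m)) m :=
      ih (i + 1) (fun k hk => hE k (by omega))
    have : i + 1 + m = i + (m + 1) := by omega
    rw [this] at w
    exact Walk.cons e w

lemma walk_len_le {V : Type*} [Fintype V] {E : V → V → Prop} (hE : Acyclic E)
    {u v : V} {n : ℕ} (w : Walk E u v n) : n ≤ Fintype.card V := by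
  by_contra h
  push_neg at h
  obtain ⟨f, _, _, hEdge⟩ := walk_fn w
  have hcard : Fintype.card V < Fintype.card (Fin (n + 1)) := by simpa using by omega
  obtain ⟨i, j, hne, heq⟩ := Fintype.exists_ne_map_eq_of_card_lt
    (fun k : Fin (n + 1) => f k.val) hcard
  rcases Ne.lt_or_gt hne with hlt | hlt
  · have w' : Walk E (f i.val) (f (i.val + (j.val - i.val))) (j.val - i.val) :=
      walk_of_fn f _ _ (fun k hk => hEdge k (by omega))
    rw [show i.val + (j.val - i.val) = j.val from by omega, ← heq] at w'
    have := hE _ _ w'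
    omega
  · have w' : Walk E (f j.val) (f (j.val + (i.val - j.val))) (i.val - j.val) :=
      walk_of_fn f _ _ (fun k hk => hEdge k (by omega))
    rw [show j.val + (i.val - j.val) = i.val from by omega, heq] at w'
    have := hE _ _ w'
    omega

lemma LPL_mono {V : Type*} [Fintype V] {E E' : V → V → Prop}
    (h : ∀ a c, E a c → E' a c) (hE' : Acyclic E') (v : V) :
    LPL E v ≤ LPL E' v := by
  apply csSup_le_csSup
  · exact ⟨Fintype.card V, fun n ⟨u, w⟩ => walk_len_le hE' w⟩
  · exact ⟨0, v, Walk.nil v⟩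
  · rintro n ⟨u, w⟩
    exact ⟨u, walk_mono h w⟩

/-- The execution cost of the reduced TPG of an STPG is a lower bound on the
execution cost of every acyclic TPG producible from it. Switchable edges are
indexed by `σ`, with `fixE s` the fixed edge and `revE s` its reversed edge;
the choice `b` settles each switchable edge. -/
theorem stmt14 {V ι σ : Type*} [Fintype V] [Fintype ι]
    (R : V → V → Prop) (fixE revE : σ → V × V) (g : ι → V)
    (hR : Acyclic R) (b : σ → Bool)
    (hT : Acyclic (fun a c => R a c ∨
      ∃ s, (if b s then fixE s else revE s) = (a, c))) :
    ∑ i, LPL R (g i) ≤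
      ∑ i, LPL (fun a c => R a c ∨
        ∃ s, (if b s then fixE s else revE s) = (a, c)) (g i) := by
  exact Finset.sum_le_sum fun i _ => LPL_mono (fun a c h => Or.inl h) hT (g i)
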